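/- For every even natural number n ≥ 2, the closed-chain AND-OR network whose run-length list consists of n + 2 copies of 2 satisfies 𝔉c([2,2,…,2]) = b_{n+2} + b_n, where (b_k) is the Fibonacci-type sequence with b_0 = b_1 = 1 and b_k = b_{k−1} + b_{k−2} (equivalently, 𝔉c([2,2,…,2]) = Fib(n+3) + Fib(n+1), with Fib(1) = Fib(2) = 1). -/

import Mathlib

/-- The open-chain AND-OR network map determined by an operator list `ops`
(`true` = AND, `false` = OR), on `ops.length + 2` nodes. -/
def chainMap (ops : List Bool) (x : Fin (ops.length + 2) → Bool) :
    Fin (ops.length + 2) → Bool := fun i =>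
  if h0 : (i : ℕ) = 0 then x ⟨1, by omega⟩
  else if hn : (i : ℕ) = ops.length + 1 then x ⟨ops.length, by omega⟩
  else
    have hi : 1 ≤ (i : ℕ) ∧ (i : ℕ) ≤ ops.length := by
      have := i.isLt; omega
    if ops.get ⟨(i : ℕ) - 1, by omega⟩
    then x ⟨(i : ℕ) - 1, by omega⟩ && x ⟨(i : ℕ) + 1, by omega⟩
    else x ⟨(i : ℕ) - 1, by omega⟩ || x ⟨(i : ℕ) + 1, by omega⟩

/-- `F ops` is the number of fixed points of the open-chain AND-OR network. -/
noncomputable def F (ops : List Bool) : ℕ :=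
  Nat.card {x : Fin (ops.length + 2) → Bool // chainMap ops x = x}

/-- Run-length encoding: block `j` (1-based) consists of `k_j` copies of
`true` if `j` is odd and `false` if `j` is even. -/
def runOps : List ℕ → List Bool
  | [] => []
  | k :: t => List.replicate k true ++ (runOps t).map (fun b => !b)

/-- `Fr L` = 𝔉(L), the number of fixed points of the open-chain AND-OR
network with run-length list `L`. -/
noncomputable def Fr (L : List ℕ) : ℕ := F (runOps L)

/-- The closed-chain AND-OR network map on `ZMod n` determined by
`ops : ZMod n → Bool` (`true` = AND, `false` = OR). -/
def cycleMap {n : ℕ} (ops : ZMod n → Bool) (x : ZMod n → Bool) :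
    ZMod n → Bool := fun i =>
  if ops i then x (i - 1) && x (i + 1) else x (i - 1) || x (i + 1)

/-- `Fc ops` is the number of fixed points of the closed-chain AND-OR network. -/
noncomputable def Fc {n : ℕ} (ops : ZMod n → Bool) : ℕ :=
  Nat.card {x : ZMod n → Bool // cycleMap ops x = x}

/-- The cyclic operator assignment for run-length list `L`: going cyclically
from index `0`, a block of `k_j` consecutive values equal to `true` if `j` is
odd and `false` if `j` is even. -/
def cOps (L : List ℕ) : ZMod L.sum → Bool :=
  fun i => (runOps L).getD i.val false

/-- `Frc L` = 𝔉c(L), the number of fixed points of the closed-chain AND-OR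
network with run-length list `L`. -/
noncomputable def Frc (L : List ℕ) : ℕ := Fc (cOps L)

/-!
Since every run has length two, the gates come in equal pairs on the nodes `2j, 2j + 1`, and at
a fixed point both nodes of a pair carry the same value `y j`. The remaining equations say that
an AND pair (`j` even) forces both neighbouring pairs to be `true` when it is, and an OR pair
(`j` odd) is forced to be `true` by each of its neighbours. Flipping `y` at the odd `j` (which
is consistent around the cycle because `n + 2` is even) turns both conditions into "no two
cyclically adjacent `true`s", so the fixed points correspond to the independent sets of the
cycle of length `n + 2`. Cutting the cycle at `0` leaves a path with prescribed end values, and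
these paths satisfy the Fibonacci recursion; the total is the Lucas number
`Fib (n + 3) + Fib (n + 1)`.
-/

def CycleIndep {m : ℕ} (z : ZMod m → Bool) : Prop :=
  ∀ j, (z j && z (j + 1)) = false

def IsIndepPath {k : ℕ} (v : Fin (k + 1) → Bool) : Prop :=
  ∀ i : Fin k, (v i.castSucc && v i.succ) = false

theorem isIndepPath_cons {k : ℕ} (b : Bool) (w : Fin (k + 1) → Bool) :
    IsIndepPath (Fin.cons b w : Fin (k + 2) → Bool) ↔ (b && w 0) = false ∧ IsIndepPath w := by
  simp [IsIndepPath, Fin.forall_fin_succ]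

theorem isIndepPath_snoc {k : ℕ} (w : Fin (k + 1) → Bool) (c : Bool) :
    IsIndepPath (Fin.snoc w c : Fin (k + 2) → Bool) ↔
      IsIndepPath w ∧ (w (Fin.last k) && c) = false := by
  simp [IsIndepPath, Fin.forall_fin_succ', ← Fin.castSucc_succ]

theorem cycleIndep_iff {k : ℕ} (z : Fin (k + 1) → Bool) :
    CycleIndep (m := k + 1) z ↔ IsIndepPath (Fin.snoc z (z 0) : Fin (k + 2) → Bool) := by
  rw [isIndepPath_snoc]
  show (∀ j : Fin (k + 1), (z j && z (j + 1)) = false) ↔ _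
  simp [IsIndepPath, Fin.forall_fin_succ', Fin.coeSucc_eq_succ, Fin.last_add_one]

/-- The interiors `v` of the independent paths `a, v₀, …, v_{k-1}, c`. -/
abbrev IndepPathBetween (a : Bool) (k : ℕ) (c : Bool) : Type :=
  {v : Fin k → Bool // IsIndepPath (Fin.cons a (Fin.snoc v c) : Fin (k + 2) → Bool)}

theorem card_indepPathBetween_succ (a : Bool) (k : ℕ) (c : Bool) :
    Nat.card (IndepPathBetween a (k + 1) c) =
      ∑ b : Bool, if (a && b) = false then Nat.card (IndepPathBetween b k c) else 0 := by
  let e := (Fin.consEquiv fun _ => Bool).symm.subtypeEquiv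
    (p := fun v => IsIndepPath (Fin.cons a (Fin.snoc v c) : Fin (k + 1 + 2) → Bool))
    (q := fun p => (a && p.1) = false ∧
      IsIndepPath (Fin.cons p.1 (Fin.snoc p.2 c) : Fin (k + 2) → Bool)) fun v => by
    conv_lhs => rw [← Fin.cons_self_tail v, ← Fin.cons_snoc_eq_snoc_cons, isIndepPath_cons]
    simp [Fin.consEquiv]
  rw [Nat.card_congr (e.trans (Equiv.subtypeProdEquivSigmaSubtype fun b w =>
    (a && b) = false ∧ IsIndepPath (Fin.cons b (Fin.snoc w c) : Fin (k + 2) → Bool))),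
    Nat.card_sigma]
  refine Fintype.sum_congr _ _ fun b => ?_
  split_ifs with h <;> simp [h]

theorem card_indepPathBetween (a : Bool) (k : ℕ) (c : Bool) :
    Nat.card (IndepPathBetween a k c) = Nat.fib (k + 2 - a.toNat - c.toNat) := by
  induction k generalizing a with
  | zero => cases a <;> cases c <;> simp [IndepPathBetween, IsIndepPath, Fin.snoc_zero]
  | succ k ih =>
    rw [card_indepPathBetween_succ]
    cases a <;> cases c <;> simp [ih, Nat.fib_add_two]

theorem card_cycleIndep (k : ℕ) :
    Nat.card {z : ZMod (k + 1) → Bool // CycleIndep z} = Nat.fib (k + 2) + Nat.fib k := by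
  let e : {z : Fin (k + 1) → Bool // CycleIndep (m := k + 1) z} ≃
      Σ b : Bool, IndepPathBetween b k b :=
    ((Fin.consEquiv fun _ => Bool).symm.subtypeEquiv (q := fun p =>
      IsIndepPath (Fin.cons p.1 (Fin.snoc p.2 p.1) : Fin (k + 2) → Bool)) fun z => by
        conv_lhs => rw [cycleIndep_iff, ← Fin.cons_self_tail z, ← Fin.cons_snoc_eq_snoc_cons]
        simp [Fin.consEquiv]).trans
    (Equiv.subtypeProdEquivSigmaSubtype fun b w =>
      IsIndepPath (Fin.cons b (Fin.snoc w b) : Fin (k + 2) → Bool))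
  refine (Nat.card_congr e).trans ?_
  rw [Nat.card_sigma, Fintype.sum_bool, card_indepPathBetween, card_indepPathBetween]
  simp [add_comm]

namespace ZMod

variable {m : ℕ}

def double (m : ℕ) : ZMod m →+ ZMod (2 * m) :=
  lift m ⟨zmultiplesHom _ 2, by simpa [mul_comm] using natCast_self (2 * m)⟩

def half (i : ZMod (2 * m)) : ZMod m := (i.val / 2 : ℕ)

theorem double_natCast (k : ℕ) : double m k = (2 * k : ℕ) := by
  rw [← Int.cast_natCast, double, lift_coe]
  simp [mul_comm]

theorem double_one : double m 1 = 2 := by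
  simpa using double_natCast (m := m) 1

theorem double_sub_one (j : ZMod m) : double m j - 1 = double m (j - 1) + 1 := by
  rw [map_sub, double_one]; ring

theorem double_add_one_add_one (j : ZMod m) : double m j + 1 + 1 = double m (j + 1) := by
  rw [map_add, double_one]; ring

variable [NeZero m]

theorem val_double (j : ZMod m) : (double m j).val = 2 * j.val := by
  rw [← natCast_zmod_val j, double_natCast, val_natCast_of_lt (by have := j.val_lt; omega),
    val_natCast_of_lt j.val_lt]

theorem val_double_add_one (j : ZMod m) : (double m j + 1).val = 2 * j.val + 1 := by
  rw [← natCast_zmod_val j, double_natCast, ← Nat.cast_succ,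
    val_natCast_of_lt (by have := j.val_lt; omega), val_natCast_of_lt j.val_lt]

theorem half_double (j : ZMod m) : half (double m j) = j := by
  simp [half, val_double]

theorem half_double_add_one (j : ZMod m) : half (double m j + 1) = j := by
  simp [half, val_double_add_one, Nat.mul_add_div]

theorem double_half_add_val_mod_two (i : ZMod (2 * m)) :
    double m (half i) + (i.val % 2 : ℕ) = i := by
  rw [half, double_natCast, ← Nat.cast_add, Nat.div_add_mod, natCast_val, cast_id', id]

theorem forall_double_and_double_add_one {P : ZMod (2 * m) → Prop} :
    (∀ i, P i) ↔ ∀ j, P (double m j) ∧ P (double m j + 1) := by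
  refine ⟨fun h j => ⟨h _, h _⟩, fun h i => ?_⟩
  rw [← double_half_add_val_mod_two i]
  rcases Nat.mod_two_eq_zero_or_one i.val with h2 | h2 <;> simp [h2, h]

theorem val_add_one_mod_two (hm : Even m) (j : ZMod m) :
    (j + 1).val % 2 = (j.val + 1) % 2 := by
  have h1 : 1 % m = 1 := Nat.mod_eq_of_lt (by obtain ⟨r, hr⟩ := hm; have := NeZero.ne m; omega)
  rw [val_add, val_one_eq_one_mod, h1, Nat.mod_mod_of_dvd _ (even_iff_two_dvd.1 hm)]

end ZMod

open ZMod

def gate (b u v : Bool) : Bool := if b then u && v else u || v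

theorem cycleMap_apply {m : ℕ} (ops x : ZMod m → Bool) (i : ZMod m) :
    cycleMap ops x i = gate (ops i) (x (i - 1)) (x (i + 1)) := rfl

theorem eq_of_gate_eq_of_gate_eq {p u v a b : Bool} (ha : gate p u b = a) (hb : gate p a v = b) :
    b = a := by
  revert ha hb; cases p <;> cases u <;> cases v <;> cases a <;> cases b <;> decide

theorem gate_eq_right_and_gate_eq_left_iff (p a b c : Bool) :
    (gate p a b = b ∧ gate p b c = b) ↔
      ((a ^^ p) && (b ^^ !p)) = false ∧ ((b ^^ !p) && (c ^^ p)) = false := by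
  cases p <;> cases a <;> cases b <;> cases c <;> decide

section DoubledNetwork

variable {m : ℕ}

/-- `y j` is the common value of the nodes `2j` and `2j + 1` of a network whose gates come
in equal pairs `o j`. -/
def IsDoubledFixedPt (o y : ZMod m → Bool) : Prop :=
  ∀ j, gate (o j) (y (j - 1)) (y j) = y j ∧ gate (o j) (y j) (y (j + 1)) = y j

theorem isDoubledFixedPt_iff_cycleIndep {o : ZMod m → Bool} (ho : ∀ j, o (j + 1) = !o j)
    (y : ZMod m → Bool) : IsDoubledFixedPt o y ↔ CycleIndep fun j => y j ^^ !o j := by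
  have ho' j : o (j - 1) = !o j := by simpa using (ho (j - 1)).symm
  simp only [IsDoubledFixedPt, CycleIndep, gate_eq_right_and_gate_eq_left_iff, ho, Bool.not_not]
  refine ⟨fun h j => (h j).2, fun h j => ⟨?_, h j⟩⟩
  simpa [ho'] using h (j - 1)

variable [NeZero m]

theorem cycleMap_eq_self_iff {ops : ZMod (2 * m) → Bool} {o : ZMod m → Bool}
    (hops : ∀ j, ops (double m j) = o j ∧ ops (double m j + 1) = o j)
    (x : ZMod (2 * m) → Bool) :
    cycleMap ops x = x ↔
      (∀ j, x (double m j + 1) = x (double m j)) ∧ IsDoubledFixedPt o (x ∘ double m) := by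
  have hx : cycleMap ops x = x ↔ ∀ j,
      gate (o j) (x (double m (j - 1) + 1)) (x (double m j + 1)) = x (double m j) ∧
      gate (o j) (x (double m j)) (x (double m (j + 1))) = x (double m j + 1) := by
    simp only [funext_iff, forall_double_and_double_add_one, cycleMap_apply, hops,
      double_sub_one, add_sub_cancel_right, double_add_one_add_one]
  rw [hx]
  constructor
  · intro h
    have hpair j : x (double m j + 1) = x (double m j) := eq_of_gate_eq_of_gate_eq (h j).1 (h j).2
    exact ⟨hpair, fun j => by simpa only [hpair, Function.comp_apply] using h j⟩
  · rintro ⟨hpair, h⟩ j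
    simpa only [hpair, Function.comp_apply] using h j

theorem Fc_eq_card_isDoubledFixedPt {ops : ZMod (2 * m) → Bool} {o : ZMod m → Bool}
    (hops : ∀ j, ops (double m j) = o j ∧ ops (double m j + 1) = o j) :
    Fc ops = Nat.card {y : ZMod m → Bool // IsDoubledFixedPt o y} := by
  refine Nat.card_congr
    { toFun x := ⟨x.1 ∘ double m, ((cycleMap_eq_self_iff hops x.1).1 x.2).2⟩
      invFun y := ⟨y.1 ∘ half, (cycleMap_eq_self_iff hops _).2 ⟨fun j => ?_, ?_⟩⟩
      left_inv x := ?_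
      right_inv y := ?_ }
  · simp [half_double, half_double_add_one]
  · simpa [Function.comp_def, half_double] using y.2
  · obtain ⟨hpair, -⟩ := (cycleMap_eq_self_iff hops x.1).1 x.2
    refine Subtype.ext (funext (forall_double_and_double_add_one.2 fun j => ?_))
    simp [half_double, half_double_add_one, hpair]
  · exact Subtype.ext (funext fun j => by simp [half_double])

theorem Fc_eq_card_cycleIndep {M : ℕ} (hm : Even m) (hM : M = 2 * m) (ops : ZMod M → Bool)
    (hops : ∀ i, ops i = decide (i.val % 4 < 2)) :
    Fc ops = Nat.card {z : ZMod m → Bool // CycleIndep z} := by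
  subst hM
  let o j := decide ((j : ZMod m).val % 2 = 0)
  have ho j : o (j + 1) = !o j := by
    have := val_add_one_mod_two hm j
    simp only [o, ← decide_not, decide_eq_decide]; omega
  have hops' j : ops (double m j) = o j ∧ ops (double m j + 1) = o j := by
    simp only [hops, val_double, val_double_add_one, o, decide_eq_decide]; omega
  let flipOdd : Equiv.Perm (ZMod m → Bool) :=
    Function.Involutive.toPerm (fun y j => y j ^^ !o j) fun y => by
      funext j; simp only [Bool.xor_assoc, Bool.xor_self, Bool.xor_false]
  rw [Fc_eq_card_isDoubledFixedPt hops']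
  exact Nat.card_congr (flipOdd.subtypeEquiv (isDoubledFixedPt_iff_cycleIndep ho))

end DoubledNetwork

theorem runOps_replicate_two (k : ℕ) :
    runOps (List.replicate k 2) = (List.range (2 * k)).map fun i => decide (i % 4 < 2) := by
  induction k with
  | zero => rfl
  | succ k ih =>
    rw [List.replicate_succ, runOps, ih, show 2 * (k + 1) = 2 + 2 * k by ring, List.range_add,
      List.map_append, List.map_map, List.map_map]
    congr 1
    refine List.map_congr_left fun i _ => ?_
    have : (2 + i) % 4 < 2 ↔ ¬i % 4 < 2 := by omega
    simp only [Function.comp_apply, this, decide_not]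

theorem cOps_replicate_two (k : ℕ) [NeZero k] (i : ZMod (List.replicate k 2).sum) :
    cOps (List.replicate k 2) i = decide (i.val % 4 < 2) := by
  have hsum : (List.replicate k 2).sum = 2 * k := by simp [mul_comm]
  have : NeZero (List.replicate k 2).sum := ⟨by simp [hsum, NeZero.ne k]⟩
  have hi : i.val < 2 * k := hsum ▸ i.val_lt
  simp [cOps, runOps_replicate_two, List.getD_eq_getElem?_getD, hi]

theorem andor_closed_chain_double_runs_count_general (n : ℕ)
    (hne : Even n) :
    Frc (List.replicate (n + 2) 2) = Nat.fib (n + 3) + Nat.fib (n + 1) := by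
  rw [Frc, Fc_eq_card_cycleIndep (hne.add even_two) (by simp [mul_comm]) _
    (cOps_replicate_two (n + 2))]
  exact card_cycleIndep (n + 1)

/-- the closed chain with run-length list `n + 2` copies of
`2` (`n ≥ 2` even) has `Fib (n+3) + Fib (n+1)` fixed points. -/
theorem andor_closed_chain_double_runs_count (n : ℕ) (hn : 2 ≤ n)
    (hne : Even n) :
    Frc (List.replicate (n + 2) 2) = Nat.fib (n + 3) + Nat.fib (n + 1) :=
  andor_closed_chain_double_runs_count_general n hne
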